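/- For every n ≥ 1, ρ_n(𝒜_Ω) = ρ_n(𝒜, Ω), i.e., sup over all products of n matrices from the Ω-lift 𝒜_Ω of |||A^{(i_n)}⋯A^{(i_1)}|||^{1/n} equals sup over Ω-admissible sequences (i_1,…,i_n) of ‖A_{i_n}⋯A_{i_1}‖^{1/n} (both suprema being 0 when the relevant sets are empty). -/

import Mathlib

open Matrix Filter
open scoped Kronecker

/-- `seqProd A n = A (n-1) * ⋯ * A 1 * A 0`. -/
def seqProd {α : Type*} [Monoid α] (A : ℕ → α) (n : ℕ) : α :=
  ((List.range n).reverse.map A).prod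

/-- The matrix `Ω_i = ω_i^T δ_i`: outer product of the `i`-th column of `ω`
with the `i`-th standard basis row vector. -/
def OmegaM {N : ℕ} (ω : Matrix (Fin N) (Fin N) ℂ) (i : Fin N) :
    Matrix (Fin N) (Fin N) ℂ :=
  vecMulVec (fun j => ω j i) (fun k => if k = i then 1 else 0)

/-- Ω-admissibility of the finite sequence `i 0, …, i (n-1)`. -/
def Adm {N : ℕ} (ω : Matrix (Fin N) (Fin N) ℂ) (i : ℕ → Fin N) (n : ℕ) : Prop :=
  (∀ k, k + 1 < n → ω (i (k + 1)) (i k) = 1) ∧ ∃ j, ω j (i (n - 1)) = 1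

/-- Ω-admissible and periodically extendable. -/
def PerAdm {N : ℕ} (ω : Matrix (Fin N) (Fin N) ℂ) (i : ℕ → Fin N) (n : ℕ) : Prop :=
  Adm ω i n ∧ ω (i 0) (i (n - 1)) = 1

/-- Only the consecutive-transition condition (the set `W⁰`). -/
def AdmZero {N : ℕ} (ω : Matrix (Fin N) (Fin N) ℂ) (i : ℕ → Fin N) (n : ℕ) : Prop :=
  ∀ k, k + 1 < n → ω (i (k + 1)) (i k) = 1

/-- Extendability to an infinite admissible sequence (the set `W^∞`). -/
def AdmInf {N : ℕ} (ω : Matrix (Fin N) (Fin N) ℂ) (i : ℕ → Fin N) (n : ℕ) : Prop :=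
  ∃ j : ℕ → Fin N, (∀ k, k < n → j k = i k) ∧ ∀ k, ω (j (k + 1)) (j k) = 1

/-- The norm `|||M||| = max_i Σ_j ‖m_{ij}‖` on `N × N` block matrices with `d × d` blocks. -/
noncomputable def blockNorm {N d : ℕ} (nrm : Matrix (Fin d) (Fin d) ℂ → ℝ)
    (M : Matrix (Fin N × Fin d) (Fin N × Fin d) ℂ) : ℝ :=
  ⨆ i : Fin N, ∑ j : Fin N, nrm (Matrix.of fun a b => M (i, a) (j, b))

/-- The lifted matrix `A^{(i)} = Ω_i ⊗ A_i`. -/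
def liftA {N d : ℕ} (ω : Matrix (Fin N) (Fin N) ℂ)
    (A : Fin N → Matrix (Fin d) (Fin d) ℂ) (i : Fin N) :
    Matrix (Fin N × Fin d) (Fin N × Fin d) ℂ :=
  OmegaM ω i ⊗ₖ A i

/-- Spectral radius of a complex matrix, as a real number. -/
noncomputable def sprad {m : Type*} [Fintype m] [DecidableEq m] (M : Matrix m m ℂ) : ℝ :=
  (spectralRadius ℂ M).toReal

/-- `ρ_n(𝒜, Ω)`. -/
noncomputable def rhoMark {N d : ℕ} (nrm : Matrix (Fin d) (Fin d) ℂ → ℝ)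
    (ω : Matrix (Fin N) (Fin N) ℂ) (A : Fin N → Matrix (Fin d) (Fin d) ℂ) (n : ℕ) : ℝ :=
  sSup {x : ℝ | ∃ i : ℕ → Fin N, Adm ω i n ∧
    x = nrm (seqProd (fun k => A (i k)) n) ^ ((1 : ℝ) / n)}

/-- `ρ^{(per)}_n(𝒜, Ω)`. -/
noncomputable def rhoPerMark {N d : ℕ} (nrm : Matrix (Fin d) (Fin d) ℂ → ℝ)
    (ω : Matrix (Fin N) (Fin N) ℂ) (A : Fin N → Matrix (Fin d) (Fin d) ℂ) (n : ℕ) : ℝ :=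
  sSup {x : ℝ | ∃ i : ℕ → Fin N, PerAdm ω i n ∧
    x = nrm (seqProd (fun k => A (i k)) n) ^ ((1 : ℝ) / n)}

/-- `ρ^{(0)}_n(𝒜, Ω)`. -/
noncomputable def rhoZeroMark {N d : ℕ} (nrm : Matrix (Fin d) (Fin d) ℂ → ℝ)
    (ω : Matrix (Fin N) (Fin N) ℂ) (A : Fin N → Matrix (Fin d) (Fin d) ℂ) (n : ℕ) : ℝ :=
  sSup {x : ℝ | ∃ i : ℕ → Fin N, AdmZero ω i n ∧
    x = nrm (seqProd (fun k => A (i k)) n) ^ ((1 : ℝ) / n)}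

/-- `ρ^{(∞)}_n(𝒜, Ω)`. -/
noncomputable def rhoInfMark {N d : ℕ} (nrm : Matrix (Fin d) (Fin d) ℂ → ℝ)
    (ω : Matrix (Fin N) (Fin N) ℂ) (A : Fin N → Matrix (Fin d) (Fin d) ℂ) (n : ℕ) : ℝ :=
  sSup {x : ℝ | ∃ i : ℕ → Fin N, AdmInf ω i n ∧
    x = nrm (seqProd (fun k => A (i k)) n) ^ ((1 : ℝ) / n)}

/-- `ρ̂_n(𝒜, Ω)`. -/
noncomputable def rhoHatMark {N d : ℕ} (ω : Matrix (Fin N) (Fin N) ℂ)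
    (A : Fin N → Matrix (Fin d) (Fin d) ℂ) (n : ℕ) : ℝ :=
  sSup {x : ℝ | ∃ i : ℕ → Fin N, Adm ω i n ∧
    x = sprad (seqProd (fun k => A (i k)) n) ^ ((1 : ℝ) / n)}

/-- `ρ̂^{(per)}_n(𝒜, Ω)`. -/
noncomputable def rhoHatPerMark {N d : ℕ} (ω : Matrix (Fin N) (Fin N) ℂ)
    (A : Fin N → Matrix (Fin d) (Fin d) ℂ) (n : ℕ) : ℝ :=
  sSup {x : ℝ | ∃ i : ℕ → Fin N, PerAdm ω i n ∧
    x = sprad (seqProd (fun k => A (i k)) n) ^ ((1 : ℝ) / n)}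

/-!
By the mixed-product property, a product of lifted matrices is
`(Ω_{i_n} ⋯ Ω_{i_1}) ⊗ (A_{i_n} ⋯ A_{i_1})`. Each `Ω_i` is the rank-one matrix `ω_i^T δ_i`, so
`Ω_{i_n} ⋯ Ω_{i_1} = (∏ ω_{i_{k+1} i_k}) • ω_{i_n}^T δ_{i_1}`: only block column `i_1` is nonzero,
and for a `{0,1}`-matrix `ω` its entries are `1` exactly in the rows `j` with `ω_{j i_n} = 1` when
all transitions are allowed. Hence `|||A^{(i_n)} ⋯ A^{(i_1)}|||` is `‖A_{i_n} ⋯ A_{i_1}‖` on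
admissible sequences and `0` on the others, and the zeros do not change a supremum of
nonnegative numbers.
-/

lemma seqProd_succ {α : Type*} [Monoid α] (f : ℕ → α) (n : ℕ) :
    seqProd f (n + 1) = f n * seqProd f n := by
  simp [seqProd, List.range_succ]

lemma seqProd_congr {α : Type*} [Monoid α] {f g : ℕ → α} {n : ℕ}
    (h : ∀ k < n, f k = g k) : seqProd f n = seqProd g n := by
  unfold seqProd
  congr 1
  refine List.map_congr_left fun k hk => h k ?_
  simpa using hk

lemma finite_range_seqProd_comp {ι α : Type*} [Finite ι] [Monoid α] (A : ι → α) (n : ℕ) :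
    (Set.range fun i : ℕ → ι => seqProd (fun k => A (i k)) n).Finite := by
  refine (Set.finite_range fun f : Fin n → ι =>
    seqProd (fun k => if h : k < n then A (f ⟨k, h⟩) else 1) n).subset ?_
  rintro _ ⟨i, rfl⟩
  exact ⟨fun k => i k, seqProd_congr fun k hk => by simp [hk]⟩

lemma seqProd_kronecker {l m α : Type*} [Fintype l] [Fintype m] [DecidableEq l] [DecidableEq m]
    [CommSemiring α] (P : ℕ → Matrix l l α) (Q : ℕ → Matrix m m α) (n : ℕ) :
    seqProd (fun k => P k ⊗ₖ Q k) n = seqProd P n ⊗ₖ seqProd Q n := by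
  induction n with
  | zero => simp [seqProd]
  | succ n ih => rw [seqProd_succ, seqProd_succ, seqProd_succ, ih, mul_kronecker_mul]

lemma kronecker_apply_block {l m n p α : Type*} [Mul α] (P : Matrix l m α) (B : Matrix n p α)
    (i : l) (j : m) : (Matrix.of fun a b => (P ⊗ₖ B) (i, a) (j, b)) = P i j • B := by
  ext a b
  simp

lemma ciSup_ite_const {ι : Type*} [Finite ι] (p : ι → Prop) [DecidablePred p]
    [Decidable (∃ j, p j)] {b : ℝ} (hb : 0 ≤ b) :
    ⨆ j, (if p j then b else 0) = if ∃ j, p j then b else 0 := by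
  split_ifs with h
  · obtain ⟨j₀, hj₀⟩ := h
    have : Nonempty ι := ⟨j₀⟩
    refine le_antisymm (ciSup_le fun j => ?_) ?_
    · split_ifs <;> simp [hb]
    · exact le_ciSup_of_le (Set.finite_range _).bddAbove j₀ (by simp [hj₀])
  · simp only [not_exists] at h
    simp [h]

lemma sSup_ite_eq_sSup_sep {ι : Type*} (P : ι → Prop) [DecidablePred P] (f : ι → ℝ)
    (hf : ∀ i, 0 ≤ f i) (hbdd : BddAbove (Set.range f)) :
    sSup {x | ∃ i, x = if P i then f i else 0} = sSup {x | ∃ i, P i ∧ x = f i} := by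
  by_cases h : ∃ i, P i
  · obtain ⟨i₀, hi₀⟩ := h
    have hS : BddAbove {x | ∃ i, P i ∧ x = f i} :=
      hbdd.mono <| by rintro _ ⟨i, -, rfl⟩; exact ⟨i, rfl⟩
    have hT : BddAbove {x | ∃ i, x = if P i then f i else 0} := by
      refine (hbdd.insert 0).mono ?_
      rintro _ ⟨i, rfl⟩
      split_ifs
      exacts [Or.inr ⟨i, rfl⟩, Or.inl rfl]
    refine le_antisymm (csSup_le ⟨_, i₀, rfl⟩ ?_) (csSup_le ⟨_, i₀, hi₀, rfl⟩ ?_)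
    · rintro _ ⟨i, rfl⟩
      split_ifs with hi
      · exact le_csSup hS ⟨i, hi, rfl⟩
      · exact (hf i₀).trans (le_csSup hS ⟨i₀, hi₀, rfl⟩)
    · rintro _ ⟨i, hi, rfl⟩
      exact le_csSup hT ⟨i, (if_pos hi).symm⟩
  · simp only [not_exists] at h
    simp only [h, if_false, false_and, exists_false, Set.ofPred_false, Real.sSup_empty]
    exact le_antisymm (Real.sSup_nonpos <| by rintro _ ⟨_, rfl⟩; rfl)
      (Real.sSup_nonneg <| by rintro _ ⟨_, rfl⟩; rfl)

section Lift

variable {N d : ℕ}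

lemma seqProd_omegaM_succ (ω : Matrix (Fin N) (Fin N) ℂ) (i : ℕ → Fin N) (n : ℕ) :
    seqProd (fun k => OmegaM ω (i k)) (n + 1) =
      vecMulVec (fun j => (∏ m ∈ Finset.range n, ω (i (m + 1)) (i m)) * ω j (i n))
        (fun k => if k = i 0 then 1 else 0) := by
  induction n with
  | zero => simp [seqProd, OmegaM]
  | succ n ih =>
    rw [seqProd_succ, ih, OmegaM, vecMulVec_mul_vecMulVec]
    ext a b
    simp only [dotProduct, ite_mul, one_mul, zero_mul, Finset.sum_ite_eq', Finset.mem_univ,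
      ↓reduceIte, vecMulVec_apply, Pi.smul_apply, smul_eq_mul, mul_ite, mul_one, mul_zero,
      Finset.prod_range_succ]
    split_ifs <;> ring

lemma prod_transitions_mul_eq_ite (ω : Matrix (Fin N) (Fin N) ℂ)
    (hω : ∀ a b, ω a b = 0 ∨ ω a b = 1) (i : ℕ → Fin N) (n : ℕ) (j : Fin N) :
    (∏ m ∈ Finset.range n, ω (i (m + 1)) (i m)) * ω j (i n) =
      if (∀ k < n, ω (i (k + 1)) (i k) = 1) ∧ ω j (i n) = 1 then 1 else 0 := by
  split_ifs with h
  · rw [Finset.prod_eq_one fun k hk => h.1 k (Finset.mem_range.1 hk), h.2, one_mul]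
  · simp only [not_and_or, not_forall] at h
    rcases h with ⟨k, hkn, hk⟩ | hj
    · rw [Finset.prod_eq_zero (Finset.mem_range.2 hkn) ((hω _ _).resolve_right hk), zero_mul]
    · rw [(hω _ _).resolve_right hj, mul_zero]

lemma blockNorm_vecMulVec_kronecker (nrm : Matrix (Fin d) (Fin d) ℂ → ℝ)
    (hsmul : ∀ (c : ℂ) M, nrm (c • M) = ‖c‖ * nrm M) (u : Fin N → ℂ) (j₀ : Fin N)
    (B : Matrix (Fin d) (Fin d) ℂ) :
    blockNorm nrm (vecMulVec u (fun k => if k = j₀ then 1 else 0) ⊗ₖ B) =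
      ⨆ j, ‖u j‖ * nrm B := by
  unfold blockNorm
  refine iSup_congr fun j => ?_
  simp only [kronecker_apply_block, hsmul]
  simp [vecMulVec_apply, apply_ite norm, ite_mul]

open Classical in
lemma blockNorm_seqProd_liftA (ω : Matrix (Fin N) (Fin N) ℂ)
    (hω : ∀ a b, ω a b = 0 ∨ ω a b = 1) (nrm : Matrix (Fin d) (Fin d) ℂ → ℝ)
    (hnn : ∀ M, 0 ≤ nrm M) (hsmul : ∀ (c : ℂ) M, nrm (c • M) = ‖c‖ * nrm M)
    (A : Fin N → Matrix (Fin d) (Fin d) ℂ) (i : ℕ → Fin N) (n : ℕ) :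
    blockNorm nrm (seqProd (fun k => liftA ω A (i k)) (n + 1)) =
      if Adm ω i (n + 1) then nrm (seqProd (fun k => A (i k)) (n + 1)) else 0 := by
  simp only [liftA, seqProd_kronecker, seqProd_omegaM_succ, blockNorm_vecMulVec_kronecker nrm hsmul,
    prod_transitions_mul_eq_ite ω hω, apply_ite norm, norm_one, norm_zero, ite_mul, one_mul,
    zero_mul]
  rw [ciSup_ite_const _ (hnn _)]
  refine if_congr ?_ rfl rfl
  simp [Adm]

end Lift

theorem stmt6_general {N d : ℕ} (ω : Matrix (Fin N) (Fin N) ℂ)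
    (hω : ∀ a b, ω a b = 0 ∨ ω a b = 1) (nrm : Matrix (Fin d) (Fin d) ℂ → ℝ)
    (hnn : ∀ M, 0 ≤ nrm M)
    (hsmul : ∀ (c : ℂ) M, nrm (c • M) = ‖c‖ * nrm M)
    (A : Fin N → Matrix (Fin d) (Fin d) ℂ) (n : ℕ) (hn : 1 ≤ n) :
    sSup {x : ℝ | ∃ i : ℕ → Fin N,
        x = blockNorm nrm (seqProd (fun k => liftA ω A (i k)) n) ^ ((1 : ℝ) / n)} =
      rhoMark nrm ω A n := by
  classical
  obtain ⟨m, rfl⟩ := Nat.exists_eq_add_of_le' hn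
  have hexp : (1 : ℝ) / (m + 1 : ℕ) ≠ 0 := by positivity
  have hbdd : BddAbove (Set.range fun i : ℕ → Fin N =>
      nrm (seqProd (fun k => A (i k)) (m + 1)) ^ ((1 : ℝ) / (m + 1 : ℕ))) :=
    Set.range_comp (nrm · ^ ((1 : ℝ) / (m + 1 : ℕ))) _ ▸
      ((finite_range_seqProd_comp A (m + 1)).image _).bddAbove
  simp only [blockNorm_seqProd_liftA ω hω nrm hnn hsmul, apply_ite (· ^ ((1 : ℝ) / (m + 1 : ℕ))),
    Real.zero_rpow hexp]
  exact sSup_ite_eq_sSup_sep _ _ (fun i => Real.rpow_nonneg (hnn _) _) hbdd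

theorem stmt6 {N d : ℕ} (hN : 0 < N) (ω : Matrix (Fin N) (Fin N) ℂ)
    (hω : ∀ a b, ω a b = 0 ∨ ω a b = 1) (nrm : Matrix (Fin d) (Fin d) ℂ → ℝ)
    (hnn : ∀ M, 0 ≤ nrm M) (hdef : ∀ M, nrm M = 0 ↔ M = 0)
    (hadd : ∀ M₁ M₂, nrm (M₁ + M₂) ≤ nrm M₁ + nrm M₂)
    (hsmul : ∀ (c : ℂ) M, nrm (c • M) = ‖c‖ * nrm M)
    (hmul : ∀ M₁ M₂, nrm (M₁ * M₂) ≤ nrm M₁ * nrm M₂)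
    (A : Fin N → Matrix (Fin d) (Fin d) ℂ) (n : ℕ) (hn : 1 ≤ n) :
    sSup {x : ℝ | ∃ i : ℕ → Fin N,
        x = blockNorm nrm (seqProd (fun k => liftA ω A (i k)) n) ^ ((1 : ℝ) / n)} =
      rhoMark nrm ω A n :=
  stmt6_general ω hω nrm hnn hsmul A n hn
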